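/- Every finite brace whose order (cardinality) is square-free is supersoluble. -/

import Mathlib

/-- A (skew left) brace: a set with an additive group structure (not necessarily abelian)
and a multiplicative group structure sharing the same identity, satisfying the skew
distributive law `a * (b + c) = a * b + -a + a * c`. -/
class SkewBrace (B : Type*) extends AddGroup B, Group B where
  one_eq_zero : (1 : B) = (0 : B)
  skew_distrib : ∀ a b c : B, a * (b + c) = a * b + -a + a * c

/-- A group is supersoluble if it has a finite chain of normal subgroups with all
factors cyclic. -/
def Group.IsSupersoluble (G : Type*) [Group G] : Prop :=
  ∃ (n : ℕ) (H : ℕ → Subgroup G),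
    H 0 = ⊥ ∧ H n = ⊤ ∧ (∀ i, (H i).Normal) ∧ (∀ i, i < n → H i ≤ H (i + 1)) ∧
    ∀ i, i < n → ∃ x ∈ H (i + 1), ∀ y ∈ H (i + 1), ∃ k : ℤ, (x ^ k)⁻¹ * y ∈ H i

namespace SkewBrace

variable {B : Type*} [SkewBrace B]

/-- `lam a b = -a + a * b`, i.e. `λ_a(b)`. -/
def lam (a b : B) : B := -a + a * b

/-- the star operation `a ∗ b = λ_a(b) - b`. -/
def starOp (a b : B) : B := lam a b + -b

/-- the additive commutator `[a,b]_+`. -/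
def addCommutator (a b : B) : B := -a + -b + a + b

/-- A subbrace of `B`: a subset that is a subgroup of both `(B,+)` and `(B,·)`. -/
structure Subbrace (B : Type*) [SkewBrace B] where
  carrier : Set B
  zero_mem : (0 : B) ∈ carrier
  add_mem : ∀ {a b : B}, a ∈ carrier → b ∈ carrier → a + b ∈ carrier
  neg_mem : ∀ {a : B}, a ∈ carrier → -a ∈ carrier
  mul_mem : ∀ {a b : B}, a ∈ carrier → b ∈ carrier → a * b ∈ carrier
  inv_mem : ∀ {a : B}, a ∈ carrier → a⁻¹ ∈ carrier

/-- An ideal of `B`: a subbrace that is normal in `(B,+)` and in `(B,·)` and is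
invariant under all the maps `λ_b`. -/
structure BraceIdeal (B : Type*) [SkewBrace B] extends Subbrace B where
  addConj_mem : ∀ (b : B) {a : B}, a ∈ carrier → b + a + -b ∈ carrier
  mulConj_mem : ∀ (b : B) {a : B}, a ∈ carrier → b * a * b⁻¹ ∈ carrier
  lam_mem : ∀ (b : B) {a : B}, a ∈ carrier → lam b a ∈ carrier

/-- The additive subgroup underlying a subbrace. -/
def Subbrace.addSubgroup (S : Subbrace B) : AddSubgroup B where
  carrier := S.carrier
  zero_mem' := S.zero_mem
  add_mem' := S.add_mem
  neg_mem' := S.neg_mem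

/-- The multiplicative subgroup underlying a subbrace. -/
def Subbrace.subgroup (S : Subbrace B) : Subgroup B where
  carrier := S.carrier
  one_mem' := by rw [one_eq_zero]; exact S.zero_mem
  mul_mem' := S.mul_mem
  inv_mem' := S.inv_mem

/-- Given ideals `J ≤ I` of `B`, `MemSocQuotRel I J x` says that the coset of `x`
lies in `Soc(I/J) = Ker(λ) ∩ Z(I/J, +)` (for `I = B` take `I = Set.univ`). -/
def MemSocQuotRel (I J : Set B) (x : B) : Prop :=
  x ∈ I ∧ (∀ y ∈ I, -y + lam x y ∈ J) ∧ ∀ y ∈ I, -(y + x) + (x + y) ∈ J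

/-- Given ideals `J ≤ I` of `B`, `MemZetaQuotRel I J x` says that the coset of `x`
lies in `ζ(I/J) = Soc(I/J) ∩ Z(I/J, ·)`. -/
def MemZetaQuotRel (I J : Set B) (x : B) : Prop :=
  MemSocQuotRel I J x ∧ ∀ y ∈ I, (y * x)⁻¹ * (x * y) ∈ J

/-- The coset of `x` lies in `Soc(B/J)`. -/
def MemSocQuot (J : Set B) (x : B) : Prop := MemSocQuotRel Set.univ J x

/-- The coset of `x` lies in `ζ(B/J)`. -/
def MemZetaQuot (J : Set B) (x : B) : Prop := MemZetaQuotRel Set.univ J x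

/-- For ideals `I ≤ J`, the additive group of the quotient `J/I` is infinite cyclic. -/
def QuotAddInfCyclic (I J : Set B) : Prop :=
  ∃ x ∈ J, (∀ y ∈ J, ∃ n : ℤ, -(n • x) + y ∈ I) ∧ ∀ n : ℤ, n • x ∈ I → n = 0

/-- For ideals `I ≤ J`, the quotient `J/I` has prime order `p`. -/
def QuotPrimeOrder (I J : Set B) (p : ℕ) : Prop :=
  p.Prime ∧ ∃ x ∈ J, x ∉ I ∧ p • x ∈ I ∧ ∀ y ∈ J, ∃ n : ℤ, -(n • x) + y ∈ I

/-- A brace is supersoluble if it has a finite chain of ideals each factor of which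
either is additively infinite cyclic and contained in the socle of the corresponding
quotient, or has prime order. -/
def IsSupersoluble (B : Type*) [SkewBrace B] : Prop :=
  ∃ (n : ℕ) (I : ℕ → BraceIdeal B),
    (I 0).carrier = {0} ∧ (I n).carrier = Set.univ ∧
    (∀ i, i < n → (I i).carrier ⊆ (I (i + 1)).carrier) ∧
    ∀ i, i < n →
      (QuotAddInfCyclic (I i).carrier (I (i + 1)).carrier ∧
        ∀ x ∈ (I (i + 1)).carrier, MemSocQuot (I i).carrier x) ∨
      ∃ p : ℕ, QuotPrimeOrder (I i).carrier (I (i + 1)).carrier p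

/-- The upper socle series of the brace (carrier of the ideal) `I`. -/
def socChainRel (I : Set B) : ℕ → Set B
  | 0 => {0}
  | n + 1 => {x | MemSocQuotRel I (socChainRel I n) x}

/-- The upper central series of the brace (carrier of the ideal) `I`. -/
def zetaChainRel (I : Set B) : ℕ → Set B
  | 0 => {0}
  | n + 1 => {x | MemZetaQuotRel I (zetaChainRel I n) x}

/-- The upper socle series `Soc_n(B)` of `B`. -/
def socChain (B : Type*) [SkewBrace B] : ℕ → Set B := socChainRel Set.univ

/-- The upper central series `ζ_n(B)` of `B`. -/
def zetaChain (B : Type*) [SkewBrace B] : ℕ → Set B := zetaChainRel Set.univ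

/-- A brace is centrally nilpotent if its upper central series reaches `B`. -/
def IsCentrallyNilpotent (B : Type*) [SkewBrace B] : Prop :=
  ∃ m : ℕ, zetaChain B m = Set.univ

end SkewBrace

/-!
In a finite group of square-free order the largest prime `p` dividing the order has a unique
subgroup of order `p`: Burnside's transfer theorem gives the Sylow subgroup for the smallest prime
`q < p` a normal complement, which contains every subgroup of order `p`, and one inducts.

Given an ideal `J ≠ B`, let `p` be the largest prime dividing `|B / J|`. Applied to `(B / J, +)`
and `(B / J, ·)`, which have the same order, uniqueness shows that `K = {x | p • x ∈ J}` and
`{x | x ^ p ∈ J}` are subgroups of order `p |J|` of `(B, +)` and of `(B, ·)`. The first is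
`λ`-invariant, hence closed under multiplication, hence contained in the second; so they coincide,
`K` is normal in both groups, and `K` is an ideal with `K / J` of order `p`. Iterating from `0`
gives a chain of ideals with factors of prime order.
-/

open Subgroup

theorem Nat.exists_isGreatest_prime_dvd {n : ℕ} (hn : 1 < n) :
    ∃ p, IsGreatest {r | r.Prime ∧ r ∣ n} p := by
  have h : {r | r.Prime ∧ r ∣ n} = n.primeFactors := by
    ext r
    simp [Nat.mem_primeFactors, (zero_lt_one.trans hn).ne']
  exact ⟨_, h ▸ n.primeFactors.isGreatest_max' (Nat.nonempty_primeFactors.mpr hn)⟩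

theorem Squarefree.eq_minFac_of_isGreatest {n : ℕ} (hn : Squarefree n)
    (h : IsGreatest {r | r.Prime ∧ r ∣ n} n.minFac) : n = n.minFac := by
  refine (Nat.Squarefree.ext_iff hn h.1.1.squarefree).mpr fun r hr => ⟨fun hrn => ?_, ?_⟩
  · rw [le_antisymm (h.2 ⟨hr, hrn⟩) (Nat.minFac_le_of_dvd hr.two_le hrn)]
  · exact fun hr' => hr'.trans h.1.2

theorem Relation.ReflTransGen.exists_seq {α : Type*} {r : α → α → Prop} {a b : α}
    (h : Relation.ReflTransGen r a b) :
    ∃ (n : ℕ) (f : ℕ → α), f 0 = a ∧ f n = b ∧ ∀ i < n, r (f i) (f (i + 1)) := by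
  induction h with
  | refl => exact ⟨0, fun _ => a, rfl, rfl, by simp⟩
  | @tail b c _ hbc ih =>
    obtain ⟨n, f, hf0, hfn, hf⟩ := ih
    refine ⟨n + 1, fun i => if i ≤ n then f i else c, by simpa using hf0, by simp, ?_⟩
    intro i hi
    rcases (Nat.lt_succ_iff.mp hi).lt_or_eq with hi | rfl
    · simpa [hi.le, Nat.succ_le_of_lt hi] using hf i hi
    · simpa [hfn] using hbc

theorem MonoidHom.le_ker_of_coprime {G G' : Type*} [Group G] [Group G'] (f : G →* G')
    {L : Subgroup G} (hL : (Nat.card L).Coprime (Nat.card G')) : L ≤ f.ker := by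
  intro x hx
  have hx' : f x ^ Nat.card L = 1 := by
    rw [← map_pow, ← L.coe_mk x hx, ← coe_pow, pow_card_eq_one', coe_one, map_one]
  simpa [hL] using pow_gcd_eq_one.mpr ⟨hx', pow_card_eq_one'⟩

section GreatestPrimeFactor

variable {G : Type*} [Group G] [Finite G] {p : ℕ}

theorem Sylow.card_eq_of_squarefree [Fact p.Prime] (hG : Squarefree (Nat.card G))
    (hp : p ∣ Nat.card G) (P : Sylow p G) : Nat.card P = p := by
  rw [P.card_eq_multiplicity, le_antisymm (hG.natFactorization_le_one p)
    ((Fact.out : p.Prime).factorization_pos_of_dvd Nat.card_pos.ne' hp), pow_one]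

theorem Subgroup.eq_of_card_eq_of_isGreatest (hG : Squarefree (Nat.card G))
    (hp : IsGreatest {r | r.Prime ∧ r ∣ Nat.card G} p) {H K : Subgroup G}
    (hH : Nat.card H = p) (hK : Nat.card K = p) : H = K := by
  induction hn : Nat.card G using Nat.strong_induction_on generalizing G with
  | _ n ih =>
  subst hn
  have hpp : p.Prime := hp.1.1
  set q := (Nat.card G).minFac
  have hq : q.Prime :=
    Nat.minFac_prime fun h => hpp.one_lt.ne' (Nat.eq_one_of_dvd_one (h ▸ hp.1.2))
  rcases (hp.2 ⟨hq, Nat.minFac_dvd _⟩ : q ≤ p).eq_or_lt with hqp | hqp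
  · have hGp : Nat.card G = p := (hG.eq_minFac_of_isGreatest (by rwa [← hqp] at hp)).trans hqp
    rw [eq_top_of_card_eq H (hH.trans hGp.symm), eq_top_of_card_eq K (hK.trans hGp.symm)]
  have : Fact q.Prime := ⟨hq⟩
  let P : Sylow q G := default
  have hPq : Nat.card P = q := P.card_eq_of_squarefree hG (Nat.minFac_dvd _)
  have hP : IsCyclic P := isCyclic_of_prime_card hPq
  let N := (MonoidHom.transferSylow P (hP.normalizer_le_centralizer rfl)).ker
  have hN : Nat.card N * q = Nat.card G := by
    rw [← hPq]
    exact (hP.isComplement' rfl).card_mul_card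
  have hNG : Nat.card N ∣ Nat.card G := Dvd.intro _ hN
  have hle : ∀ L : Subgroup G, Nat.card L = p → L ≤ N := fun L hL =>
    MonoidHom.le_ker_of_coprime _ <| by
      rw [hL, hPq]
      exact (Nat.coprime_primes hpp hq).mpr hqp.ne'
  have hcard : ∀ L : Subgroup G, Nat.card L = p → Nat.card (L.subgroupOf N) = p :=
    fun L hL => (Nat.card_congr (subgroupOfEquivOfLe (hle L hL)).toEquiv).trans hL
  have := ih _ (hN ▸ lt_mul_right Nat.card_pos hq.one_lt) (G := N) (hG.squarefree_of_dvd hNG)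
    ⟨⟨hpp, hH ▸ card_dvd_of_le (hle H hH)⟩, fun r hr => hp.2 ⟨hr.1, hr.2.trans hNG⟩⟩
    (hcard H hH) (hcard K hK) rfl
  rwa [subgroupOf_inj, inf_of_le_left (hle H hH), inf_of_le_left (hle K hK)] at this

theorem pow_eq_one_iff_mem_zpowers_of_isGreatest (hG : Squarefree (Nat.card G))
    (hp : IsGreatest {r | r.Prime ∧ r ∣ Nat.card G} p) {g : G} (hg : orderOf g = p) {x : G} :
    x ^ p = 1 ↔ x ∈ zpowers g := by
  have : Fact p.Prime := ⟨hp.1.1⟩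
  refine ⟨fun hx => ?_, ?_⟩
  · rcases eq_or_ne x 1 with rfl | hx1
    · exact one_mem _
    rw [← eq_of_card_eq_of_isGreatest hG hp (H := zpowers x) (K := zpowers g)
      (by rw [Nat.card_zpowers, orderOf_eq_prime hx hx1]) (by rw [Nat.card_zpowers, hg])]
    exact mem_zpowers x
  · rintro ⟨k, rfl⟩
    rw [← zpow_natCast, ← zpow_mul, mul_comm, zpow_mul, zpow_natCast, ← hg, pow_orderOf_eq_one,
      one_zpow]

theorem nsmul_eq_zero_iff_mem_zmultiples_of_isGreatest {A : Type*} [AddGroup A] [Finite A]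
    {p : ℕ} (hA : Squarefree (Nat.card A)) (hp : IsGreatest {r | r.Prime ∧ r ∣ Nat.card A} p)
    {a : A} (ha : addOrderOf a = p) {x : A} : p • x = 0 ↔ x ∈ AddSubgroup.zmultiples a :=
  pow_eq_one_iff_mem_zpowers_of_isGreatest (G := Multiplicative A) hA hp
    (g := Multiplicative.ofAdd a) (by simpa using ha)

attribute [to_additive existing] pow_eq_one_iff_mem_zpowers_of_isGreatest

@[to_additive]
theorem Subgroup.card_comap_mk' (N : Subgroup G) [N.Normal] (S : Subgroup (G ⧸ N)) :
    Nat.card (S.comap (QuotientGroup.mk' N)) = Nat.card S * Nat.card N := by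
  have hS := QuotientGroup.mk'_surjective N
  refine Nat.eq_of_mul_eq_mul_right (Nat.pos_of_ne_zero (index_ne_zero_of_finite (H := S))) ?_
  calc Nat.card (S.comap (QuotientGroup.mk' N)) * S.index
      = Nat.card (S.comap (QuotientGroup.mk' N)) * (S.comap (QuotientGroup.mk' N)).index := by
        rw [index_comap_of_surjective S hS]
    _ = Nat.card (G ⧸ N) * Nat.card N := by
        rw [card_mul_index, card_eq_card_quotient_mul_card_subgroup]
    _ = Nat.card S * Nat.card N * S.index := by rw [← S.card_mul_index]; ring

theorem Subgroup.pow_mem_of_card_eq_mul {N H : Subgroup G} [N.Normal] (hNH : N ≤ H)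
    (hH : Nat.card H = p * Nat.card N) {x : G} (hx : x ∈ H) : x ^ p ∈ N := by
  have hN : Nat.card (N.subgroupOf H) = Nat.card N :=
    Nat.card_congr (subgroupOfEquivOfLe hNH).toEquiv
  have hidx : (N.subgroupOf H).index = p := by
    refine Nat.eq_of_mul_eq_mul_left (Nat.card_pos (α := N)) ?_
    rw [← hN, card_mul_index, hH, mul_comm, hN]
  simpa [hidx, mem_subgroupOf] using pow_index_mem (N.subgroupOf H) ⟨x, hx⟩

@[to_additive]
theorem Subgroup.exists_mem_iff_pow_mem_of_isGreatest (N : Subgroup G) [N.Normal]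
    (hN : Squarefree (Nat.card (G ⧸ N)))
    (hp : IsGreatest {r | r.Prime ∧ r ∣ Nat.card (G ⧸ N)} p) :
    ∃ H : Subgroup G, (∀ x, x ∈ H ↔ x ^ p ∈ N) ∧ Nat.card H = p * Nat.card N ∧
      ∃ g ∈ H, g ∉ N ∧ ∀ x ∈ H, ∃ k : ℤ, (g ^ k)⁻¹ * x ∈ N := by
  have : Fact p.Prime := ⟨hp.1.1⟩
  obtain ⟨c, hc⟩ := exists_prime_orderOf_dvd_card' p hp.1.2
  obtain ⟨g, rfl⟩ := QuotientGroup.mk'_surjective N c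
  have hmem : ∀ x, x ∈ (zpowers (QuotientGroup.mk' N g)).comap (QuotientGroup.mk' N) ↔
      x ^ p ∈ N := by
    intro x
    rw [mem_comap, ← pow_eq_one_iff_mem_zpowers_of_isGreatest hN hp hc, ← map_pow,
      QuotientGroup.mk'_apply, QuotientGroup.eq_one_iff]
  refine ⟨_, hmem, by rw [card_comap_mk', Nat.card_zpowers, hc], g, mem_zpowers _, ?_, ?_⟩
  · intro hg
    rw [← QuotientGroup.eq_one_iff, ← QuotientGroup.mk'_apply, ← orderOf_eq_one_iff, hc] at hg
    exact hp.1.1.one_lt.ne' hg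
  · rintro x ⟨k, hk⟩
    exact ⟨k, QuotientGroup.eq.mp (by simpa using hk)⟩

end GreatestPrimeFactor

namespace SkewBrace

section

variable {B : Type*} [SkewBrace B]

theorem lam_add (a b c : B) : lam a (b + c) = lam a b + lam a c := by
  simp only [lam, skew_distrib, add_assoc]

def lamHom (a : B) : B →+ B := AddMonoidHom.mk' (lam a) (lam_add a)

theorem lam_zero (a : B) : lam a 0 = 0 := map_zero (lamHom a)

theorem lam_nsmul (a x : B) (n : ℕ) : lam a (n • x) = n • lam a x := map_nsmul (lamHom a) n x

theorem mul_eq_add_lam (a b : B) : a * b = a + lam a b := by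
  rw [lam, add_neg_cancel_left]

theorem inv_eq_neg_lam (a : B) : a⁻¹ = -lam a⁻¹ a := by
  rw [eq_neg_iff_add_eq_zero, ← mul_eq_add_lam, inv_mul_cancel, one_eq_zero]

def Subbrace.ofLamMem (A : AddSubgroup B) (hA : ∀ a, ∀ x ∈ A, lam a x ∈ A) : Subbrace B where
  carrier := A
  zero_mem := A.zero_mem
  add_mem := A.add_mem
  neg_mem := A.neg_mem
  mul_mem {a b} ha hb := by rw [mul_eq_add_lam]; exact A.add_mem ha (hA a b hb)
  inv_mem {a} ha := by rw [inv_eq_neg_lam]; exact A.neg_mem (hA _ a ha)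

instance (J : BraceIdeal B) : J.toSubbrace.addSubgroup.Normal :=
  ⟨fun _ ha b => J.addConj_mem b ha⟩

instance (J : BraceIdeal B) : J.toSubbrace.subgroup.Normal :=
  ⟨fun _ ha b => J.mulConj_mem b ha⟩

instance : Bot (BraceIdeal B) where
  bot :=
    { toSubbrace := Subbrace.ofLamMem ⊥ fun a x hx => by
        rw [AddSubgroup.mem_bot.mp hx, lam_zero]; exact zero_mem _
      addConj_mem := fun b a ha => by
        obtain rfl : a = 0 := ha
        show b + 0 + -b = 0
        rw [add_zero, add_neg_cancel]
      mulConj_mem := fun b a ha => by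
        obtain rfl : a = 0 := ha
        show b * 0 * b⁻¹ = 0
        rw [← one_eq_zero, mul_one, mul_inv_cancel]
      lam_mem := fun b a ha => by
        obtain rfl : a = 0 := ha
        exact lam_zero b }

theorem bot_carrier : (⊥ : BraceIdeal B).carrier = {0} := rfl

def IsPrimeOrderStep (I K : BraceIdeal B) : Prop :=
  I.carrier ⊆ K.carrier ∧ ∃ p, QuotPrimeOrder I.carrier K.carrier p

theorem lam_mem_of_forall_mem_iff_nsmul_mem (J : BraceIdeal B) {p : ℕ} {A : AddSubgroup B}
    (hA : ∀ x, x ∈ A ↔ p • x ∈ J.carrier) (a : B) {x : B} (hx : x ∈ A) : lam a x ∈ A := by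
  rw [hA, ← lam_nsmul]
  exact J.lam_mem a ((hA x).1 hx)

def BraceIdeal.ofNSMulMem (J : BraceIdeal B) (p : ℕ) (A : AddSubgroup B)
    (hA : ∀ x, x ∈ A ↔ p • x ∈ J.carrier) (hA' : ∀ x, x ∈ A ↔ x ^ p ∈ J.carrier) :
    BraceIdeal B where
  toSubbrace := Subbrace.ofLamMem A fun a _ => lam_mem_of_forall_mem_iff_nsmul_mem J hA a
  addConj_mem b x hx := by
    refine (hA _).2 ?_
    rw [addConj_nsmul]
    exact J.addConj_mem b ((hA x).1 hx)
  mulConj_mem b x hx := by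
    refine (hA' _).2 ?_
    rw [conj_pow]
    exact J.mulConj_mem b ((hA' x).1 hx)
  lam_mem b _ := lam_mem_of_forall_mem_iff_nsmul_mem J hA b

theorem mem_iff_pow_mem_of_card_eq [Finite B] (J : BraceIdeal B) {p : ℕ} {A : AddSubgroup B}
    {M : Subgroup B} (hA : ∀ x, x ∈ A ↔ p • x ∈ J.carrier) (hM : ∀ x, x ∈ M ↔ x ^ p ∈ J.carrier)
    (hAcard : Nat.card A = p * Nat.card J.carrier) (hMcard : Nat.card M = Nat.card A) (x : B) :
    x ∈ A ↔ x ^ p ∈ J.carrier := by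
  let A' := Subbrace.ofLamMem A fun a _ => lam_mem_of_forall_mem_iff_nsmul_mem J hA a
  have hJA : J.toSubbrace.subgroup ≤ A'.subgroup := fun y hy =>
    (hA y).2 (J.toSubbrace.addSubgroup.nsmul_mem hy p)
  have hsub : (A : Set B) ⊆ M := fun y hy =>
    (hM y).2 (Subgroup.pow_mem_of_card_eq_mul hJA hAcard hy)
  have heq : (A : Set B) = M := Set.eq_of_subset_of_ncard_le hsub <| by
    rw [← Nat.card_coe_set_eq, ← Nat.card_coe_set_eq]
    exact hMcard.le
  rw [← hM, ← SetLike.mem_coe, heq, SetLike.mem_coe]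

variable [Finite B]

theorem exists_isPrimeOrderStep (hB : Squarefree (Nat.card B)) (J : BraceIdeal B)
    (hJ : J.carrier ≠ Set.univ) : ∃ K, IsPrimeOrderStep J K := by
  set Ja := J.toSubbrace.addSubgroup
  set Jm := J.toSubbrace.subgroup
  have hcard : Nat.card (B ⧸ Jm) = Nat.card (B ⧸ Ja) := by
    refine Nat.eq_of_mul_eq_mul_right (Nat.card_pos (α := Ja)) ?_
    rw [← AddSubgroup.card_eq_card_quotient_mul_card_addSubgroup,
      show Nat.card Ja = Nat.card Jm from rfl, ← Subgroup.card_eq_card_quotient_mul_card_subgroup]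
  have hsq : Squarefree (Nat.card (B ⧸ Ja)) :=
    hB.squarefree_of_dvd (AddSubgroup.card_quotient_dvd_card Ja)
  obtain ⟨p, hp⟩ : ∃ p, IsGreatest {r | r.Prime ∧ r ∣ Nat.card (B ⧸ Ja)} p :=
    Nat.exists_isGreatest_prime_dvd <|
      AddSubgroup.one_lt_index_of_ne_top fun h => hJ (congrArg SetLike.coe h)
  obtain ⟨A, hA, hAcard, x, hxA, hxJ, hgen⟩ := Ja.exists_mem_iff_nsmul_mem_of_isGreatest hsq hp
  obtain ⟨M, hM, hMcard, -⟩ :=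
    Jm.exists_mem_iff_pow_mem_of_isGreatest (hcard ▸ hsq) (hcard ▸ hp)
  refine ⟨J.ofNSMulMem p A hA (mem_iff_pow_mem_of_card_eq J hA hM hAcard
    (hMcard.trans hAcard.symm)), fun y hy => (hA y).2 (Ja.nsmul_mem hy p), p, hp.1.1,
    x, hxA, hxJ, (hA x).1 hxA, hgen⟩

theorem exists_reflTransGen_isPrimeOrderStep (hB : Squarefree (Nat.card B)) (J : BraceIdeal B) :
    ∃ K : BraceIdeal B, K.carrier = Set.univ ∧ Relation.ReflTransGen IsPrimeOrderStep J K := by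
  induction hn : J.carrierᶜ.ncard using Nat.strong_induction_on generalizing J with
  | _ n ih =>
  by_cases hJ : J.carrier = Set.univ
  · exact ⟨J, hJ, .refl⟩
  obtain ⟨K, hJK⟩ := exists_isPrimeOrderStep hB J hJ
  obtain ⟨-, -, x, hxK, hxJ, -⟩ := hJK.2
  have hlt : K.carrierᶜ.ncard < n :=
    hn ▸ Set.ncard_lt_ncard (compl_lt_compl_iff_lt.mpr ⟨hJK.1, fun h => hxJ (h hxK)⟩)
  obtain ⟨L, hL, hKL⟩ := ih _ hlt K rfl
  exact ⟨L, hL, .head hJK hKL⟩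

end

/-- Every finite brace of square-free order is supersoluble. -/
theorem isSupersoluble_of_squarefree_card (B : Type*) [SkewBrace B] [Finite B]
    (h : Squarefree (Nat.card B)) : IsSupersoluble B := by
  obtain ⟨K, hK, hchain⟩ := exists_reflTransGen_isPrimeOrderStep h ⊥
  obtain ⟨n, I, hI0, hIn, hstep⟩ := hchain.exists_seq
  exact ⟨n, I, hI0 ▸ bot_carrier, hIn ▸ hK, fun i hi => (hstep i hi).1,
    fun i hi => Or.inr (hstep i hi).2⟩

end SkewBrace
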